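/- arXiv:math/9908119 — 4 statements merged into one kernel-verified Lean document; each statement's English description precedes it below -/
import Mathlib

section
/- Let A be a C*-algebra that is not commutative (there exist a, b ∈ A with a·b ≠ b·a). Then there exist elements x, y ∈ A such that ‖x·x* + y·y*‖ ≠ ‖x*·x + y*·y‖. -/
/-!
If `‖x x* + y y*‖ = ‖x* x + y* y‖` for all `x, y`, take `y = √(‖x‖² - x x*)`, so that
`x x* + y y* = ‖x‖²`. Then `x* x + (‖x‖² - x x*) ≤ ‖x* x + y* y‖ = ‖x‖²`,
i.e. `x* x ≤ x x*`.
Applied to `x*` as well, this makes every element normal; normality of `p + i q` for self-adjoint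
`p, q` means that `p` and `q` commute, and the real and imaginary parts of arbitrary elements then
commute, so the algebra is commutative.
-/

open Complex ComplexStarModule

section ComplexStarModule

variable {A : Type*} [NonUnitalNonAssocRing A] [StarRing A] [Module ℂ A] [IsScalarTower ℂ A A]
  [SMulCommClass ℂ A A] [StarModule ℂ A]

lemma IsSelfAdjoint.commute_of_isStarNormal_add_I_smul {p q : A} (hp : IsSelfAdjoint p)
    (hq : IsSelfAdjoint q) (hpq : IsStarNormal (p + I • q)) : Commute p q := by
  have hre : (ℜ (p + I • q) : A) = p := by
    simp [realPart_I_smul, hp.coe_realPart, hq.imaginaryPart]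
  have him : (ℑ (p + I • q) : A) = q := by
    simp [imaginaryPart_I_smul, hp.imaginaryPart, hq.coe_realPart]
  have := isStarNormal_iff_commute_realPart_imaginaryPart.mp hpq
  rwa [hre, him] at this

lemma commute_of_forall_isStarNormal (h : ∀ x : A, IsStarNormal x) (a b : A) : Commute a b := by
  have hsa : ∀ p q : selfAdjoint A, Commute (p : A) q :=
    fun p q ↦ p.2.commute_of_isStarNormal_add_I_smul q.2 (h _)
  rw [← realPart_add_I_smul_imaginaryPart a, ← realPart_add_I_smul_imaginaryPart b]
  exact .add_left (.add_right (hsa _ _) ((hsa _ _).smul_right I))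
    (((hsa _ _).add_right ((hsa _ _).smul_right I)).smul_left I)

end ComplexStarModule

section CStarAlgebra

variable {A : Type*} [CStarAlgebra A] [PartialOrder A] [StarOrderedRing A]

lemma CStarAlgebra.star_mul_self_le_mul_star_self_of_norm_eq {x : A}
    (h : ∀ y : A, ‖x * star x + y * star y‖ = ‖star x * x + star y * y‖) :
    star x * x ≤ x * star x := by
  rcases subsingleton_or_nontrivial A with hA | hA
  · exact (Subsingleton.elim _ _).le
  set c : A := algebraMap ℝ A (‖x‖ ^ 2)
  set p : A := c - x * star x
  have hp : 0 ≤ p := sub_nonneg.mpr CStarAlgebra.mul_star_le_algebraMap_norm_sq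
  set y : A := CFC.sqrt p
  have hy : star y = y := (CFC.sqrt_nonneg p).isSelfAdjoint.star_eq
  have hyy : y * y = p := CFC.sqrt_mul_sqrt_self p hp
  have hsum : x * star x + y * star y = c := by rw [hy, hyy, add_sub_cancel]
  have hnorm : ‖star x * x + star y * y‖ = ‖x‖ ^ 2 := by
    rw [← h, hsum, norm_algebraMap', Real.norm_of_nonneg (by positivity)]
  have hle := ((IsSelfAdjoint.star_mul_self x).add (.star_mul_self y)).le_algebraMap_norm_self
  rwa [hnorm, hy, hyy, add_sub_left_comm, add_le_iff_nonpos_right, sub_nonpos] at hle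

lemma CStarAlgebra.isStarNormal_of_forall_norm_eq
    (h : ∀ x y : A, ‖x * star x + y * star y‖ = ‖star x * x + star y * y‖) (x : A) :
    IsStarNormal x := by
  refine ⟨le_antisymm (star_mul_self_le_mul_star_self_of_norm_eq (h x)) ?_⟩
  simpa using star_mul_self_le_mul_star_self_of_norm_eq (h (star x))

end CStarAlgebra

/-- **Akemann's theorem** (Theorem 8): if a C*-algebra `A` is not commutative, then there
exist `x, y ∈ A` with `‖x x* + y y*‖ ≠ ‖x* x + y* y‖`. -/
theorem akemann_noncommutative_norm_ineq (A : Type*) [CStarAlgebra A]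
    (h : ∃ a b : A, a * b ≠ b * a) :
    ∃ x y : A, ‖x * star x + y * star y‖ ≠ ‖star x * x + star y * y‖ := by
  obtain ⟨a, b, hab⟩ := h
  by_contra! hnorm
  let _ := CStarAlgebra.spectralOrder A
  have := CStarAlgebra.spectralOrderedRing A
  have hnormal := CStarAlgebra.isStarNormal_of_forall_norm_eq hnorm
  exact hab (commute_of_forall_isStarNormal hnormal a b)
end

section
/- Let A be a C*-algebra and let a, b ∈ A be positive elements with ‖a‖ ≤ 1, ‖b‖ ≤ 1, and ‖a·b‖ < 1. Then ‖a² + b²‖ < 2. -/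
/-- If `a, b` are positive elements of a C*-algebra with `‖a‖ ≤ 1`, `‖b‖ ≤ 1` and
`‖a b‖ < 1`, then `‖a² + b²‖ < 2`. -/
theorem norm_sq_add_sq_lt_two (A : Type*) [CStarAlgebra A] (a b : A)
    (ha : ∃ c : A, a = star c * c) (hb : ∃ c : A, b = star c * c)
    (ha1 : ‖a‖ ≤ 1) (hb1 : ‖b‖ ≤ 1) (hab : ‖a * b‖ < 1) :
    ‖a ^ 2 + b ^ 2‖ < 2 := by
  letI := CStarAlgebra.spectralOrder A
  letI := CStarAlgebra.spectralOrderedRing A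
  obtain ⟨c, rfl⟩ := ha
  obtain ⟨d, rfl⟩ := hb
  set a := star c * c with ha'
  set b := star d * d with hb'
  clear_value a b
  have ha0 : (0 : A) ≤ a := ha' ▸ star_mul_self_nonneg c
  have hb0 : (0 : A) ≤ b := hb' ▸ star_mul_self_nonneg d
  have hasa : IsSelfAdjoint a := ha' ▸ IsSelfAdjoint.star_mul_self c
  have hbsa : IsSelfAdjoint b := hb' ▸ IsSelfAdjoint.star_mul_self d
  have hale : a ≤ 1 := (CStarAlgebra.norm_le_one_iff_of_nonneg a ha0).mp ha1
  have hble : b ≤ 1 := (CStarAlgebra.norm_le_one_iff_of_nonneg b hb0).mp hb1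
  set x := a ^ 2 + b ^ 2 with hx
  have hx0 : (0 : A) ≤ x := add_nonneg (CStarAlgebra.pow_nonneg ha0 2) (CStarAlgebra.pow_nonneg hb0 2)
  have hxsa : IsSelfAdjoint x := (hasa.pow 2).add (hbsa.pow 2)
  clear_value x
  -- ‖x‖² = ‖x²‖
  have hnormsq : ‖x‖ ^ 2 = ‖x ^ 2‖ := by
    rw [sq, sq, ← CStarRing.norm_star_mul_self (x := x), hxsa.star_eq]
  -- x² = (a⁴ + b⁴) + (a²b² + b²a²)
  have hexp : x ^ 2 = (a ^ 4 + b ^ 4) + (a ^ 2 * b ^ 2 + b ^ 2 * a ^ 2) := by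
    rw [hx]; noncomm_ring
  -- a⁴ + b⁴ ≤ a² + b²
  have h44 : a ^ 4 + b ^ 4 ≤ x := by
    have h1 : a ^ 4 ≤ a ^ 2 := CStarAlgebra.pow_antitone ha0 hale (by norm_num)
    have h2 : b ^ 4 ≤ b ^ 2 := CStarAlgebra.pow_antitone hb0 hble (by norm_num)
    rw [hx]; exact add_le_add h1 h2
  have h44norm : ‖a ^ 4 + b ^ 4‖ ≤ ‖x‖ :=
    CStarAlgebra.norm_le_norm_of_nonneg_of_le
      (add_nonneg (CStarAlgebra.pow_nonneg ha0 4) (CStarAlgebra.pow_nonneg hb0 4)) h44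
  -- ‖a²b²‖ ≤ ‖ab‖
  have hcross : ‖a ^ 2 * b ^ 2‖ ≤ ‖a * b‖ := by
    have : a ^ 2 * b ^ 2 = a * (a * b) * b := by noncomm_ring
    rw [this]
    calc ‖a * (a * b) * b‖ ≤ ‖a * (a * b)‖ * ‖b‖ := norm_mul_le _ _
      _ ≤ ‖a‖ * ‖a * b‖ * ‖b‖ := by
          gcongr; exact norm_mul_le _ _
      _ ≤ 1 * ‖a * b‖ * 1 := by
          have := norm_nonneg (a * b)
          gcongr
      _ = ‖a * b‖ := by ring
  have hcross' : ‖b ^ 2 * a ^ 2‖ ≤ ‖a * b‖ := by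
    have : b ^ 2 * a ^ 2 = star (a ^ 2 * b ^ 2) := by
      simp [star_mul, (hasa.pow 2).star_eq, (hbsa.pow 2).star_eq]
    rw [this, norm_star]
    exact hcross
  have key : ‖x‖ ^ 2 ≤ ‖x‖ + 2 * ‖a * b‖ := by
    rw [hnormsq, hexp]
    calc ‖(a ^ 4 + b ^ 4) + (a ^ 2 * b ^ 2 + b ^ 2 * a ^ 2)‖
        ≤ ‖a ^ 4 + b ^ 4‖ + (‖a ^ 2 * b ^ 2‖ + ‖b ^ 2 * a ^ 2‖) := by
          refine (norm_add_le _ _).trans ?_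
          gcongr
          exact norm_add_le _ _
      _ ≤ ‖x‖ + 2 * ‖a * b‖ := by linarith
  nlinarith [norm_nonneg x, hab, norm_nonneg (a * b)]
end

section
/- Let A be a commutative C*-algebra and E a Hilbert *-bimodule over A (so that ‖·‖_m is a norm: ‖x‖_m = 0 implies x = 0). Suppose that ⟨x, y⟩ is a self-adjoint element of A whenever x, y ∈ E are self-adjoint (x* = x and y* = y). Then the left and right actions of A on E coincide: a•x = x•a for all a ∈ A and x ∈ E. -/
/-- A pre-Hilbert `*`-bimodule over a C*-algebra `A`: a complex vector space `E` with
commuting left and right `A`-module structures compatible with the complex scalar action,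
an `A`-bilinear map `inn : E × E → A`, and a conjugate-linear involution `invol`, satisfying
(a) `⟨x,y⟩* = ⟨y*, x*⟩`, (b) `(a•x)* = x*•a*`, and (c) `⟨x, x*⟩ ≥ 0`. -/
structure PreHilbertStarBimodule (A : Type*) [CStarAlgebra A] [PartialOrder A]
    [StarOrderedRing A] (E : Type*) [AddCommGroup E] [Module ℂ E] where
  /-- the left action of `A` on `E` -/
  lsmul : A → E → E
  /-- the right action of `A` on `E` -/
  rsmul : E → A → E
  /-- the `A`-valued bilinear pairing -/
  inn : E → E → A
  /-- the involution on `E` -/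
  invol : E → E
  lsmul_add : ∀ (a : A) (x y : E), lsmul a (x + y) = lsmul a x + lsmul a y
  add_lsmul : ∀ (a b : A) (x : E), lsmul (a + b) x = lsmul a x + lsmul b x
  mul_lsmul : ∀ (a b : A) (x : E), lsmul (a * b) x = lsmul a (lsmul b x)
  one_lsmul : ∀ x : E, lsmul 1 x = x
  lsmul_csmul : ∀ (c : ℂ) (a : A) (x : E), lsmul a (c • x) = c • lsmul a x
  csmul_lsmul : ∀ (c : ℂ) (a : A) (x : E), lsmul (c • a) x = c • lsmul a x
  rsmul_add : ∀ (x y : E) (a : A), rsmul (x + y) a = rsmul x a + rsmul y a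
  add_rsmul : ∀ (x : E) (a b : A), rsmul x (a + b) = rsmul x a + rsmul x b
  rsmul_mul : ∀ (x : E) (a b : A), rsmul x (a * b) = rsmul (rsmul x a) b
  rsmul_one : ∀ x : E, rsmul x 1 = x
  rsmul_csmul : ∀ (c : ℂ) (x : E) (a : A), rsmul (c • x) a = c • rsmul x a
  csmul_rsmul : ∀ (c : ℂ) (x : E) (a : A), rsmul x (c • a) = c • rsmul x a
  lsmul_rsmul_comm : ∀ (a : A) (x : E) (b : A), lsmul a (rsmul x b) = rsmul (lsmul a x) b
  inn_add_left : ∀ x y z : E, inn (x + y) z = inn x z + inn y z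
  inn_add_right : ∀ x y z : E, inn x (y + z) = inn x y + inn x z
  inn_csmul_left : ∀ (c : ℂ) (x y : E), inn (c • x) y = c • inn x y
  inn_csmul_right : ∀ (c : ℂ) (x y : E), inn x (c • y) = c • inn x y
  inn_lsmul_left : ∀ (a : A) (x y : E), inn (lsmul a x) y = a * inn x y
  inn_rsmul_left : ∀ (a : A) (x y : E), inn (rsmul x a) y = inn x (lsmul a y)
  inn_rsmul_right : ∀ (a : A) (x y : E), inn x (rsmul y a) = inn x y * a
  invol_add : ∀ x y : E, invol (x + y) = invol x + invol y
  invol_csmul : ∀ (c : ℂ) (x : E), invol (c • x) = (starRingEnd ℂ c) • invol x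
  invol_invol : ∀ x : E, invol (invol x) = x
  star_inn : ∀ x y : E, star (inn x y) = inn (invol y) (invol x)
  invol_lsmul : ∀ (a : A) (x : E), invol (lsmul a x) = rsmul (invol x) (star a)
  inn_invol_nonneg : ∀ x : E, 0 ≤ inn x (invol x)

namespace PreHilbertStarBimodule

variable {A : Type*} [CStarAlgebra A] [PartialOrder A] [StarOrderedRing A]
variable {E : Type*} [AddCommGroup E] [Module ℂ E]

/-- the left seminorm `‖x‖_l = ‖⟨x, x*⟩‖^{1/2}` -/
noncomputable def normL (M : PreHilbertStarBimodule A E) (x : E) : ℝ :=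
  Real.sqrt ‖M.inn x (M.invol x)‖

/-- the right seminorm `‖x‖_r = ‖⟨x*, x⟩‖^{1/2}` -/
noncomputable def normR (M : PreHilbertStarBimodule A E) (x : E) : ℝ :=
  Real.sqrt ‖M.inn (M.invol x) x‖

/-- the max seminorm `‖x‖_m = max (‖x‖_l, ‖x‖_r)` -/
noncomputable def normM (M : PreHilbertStarBimodule A E) (x : E) : ℝ :=
  max (M.normL x) (M.normR x)

lemma inn_sub_left' (M : PreHilbertStarBimodule A E) (x y z : E) :
    M.inn (x - y) z = M.inn x z - M.inn y z := by
  rw [eq_sub_iff_add_eq, ← M.inn_add_left, sub_add_cancel]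

lemma inn_sub_right' (M : PreHilbertStarBimodule A E) (x y z : E) :
    M.inn x (y - z) = M.inn x y - M.inn x z := by
  rw [eq_sub_iff_add_eq, ← M.inn_add_right, sub_add_cancel]

lemma invol_sub' (M : PreHilbertStarBimodule A E) (x y : E) :
    M.invol (x - y) = M.invol x - M.invol y := by
  rw [eq_sub_iff_add_eq, ← M.invol_add, sub_add_cancel]

lemma invol_rsmul' (M : PreHilbertStarBimodule A E) (x : E) (a : A) :
    M.invol (M.rsmul x a) = M.lsmul (star a) (M.invol x) := by
  have h := congrArg M.invol (M.invol_lsmul (star a) (M.invol x))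
  rw [M.invol_invol x, star_star, M.invol_invol] at h
  exact h.symm

/-- Every element decomposes into self-adjoint parts. -/
lemma decomp' (M : PreHilbertStarBimodule A E) (u : E) :
    ∃ p q : E, M.invol p = p ∧ M.invol q = q ∧
      u = (2⁻¹ : ℂ) • p + ((2⁻¹ : ℂ) * Complex.I) • q := by
  refine ⟨u + M.invol u, Complex.I • (M.invol u - u), ?_, ?_, ?_⟩
  · rw [M.invol_add, M.invol_invol, add_comm]
  · rw [M.invol_csmul, invol_sub', M.invol_invol]
    simp only [Complex.conj_I, neg_smul, smul_sub]
    module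
  · rw [smul_smul]
    have h : (2⁻¹ : ℂ) * Complex.I * Complex.I = -2⁻¹ := by
      rw [mul_assoc, Complex.I_mul_I]; ring
    rw [h]
    module

end PreHilbertStarBimodule

/-- **Theorem 11 (main step)**: if `A` is commutative, `E` is a Hilbert `*`-bimodule over `A`
(`‖·‖_m` is definite), and inner products of self-adjoint elements are self-adjoint, then the
left and right actions of `A` on `E` coincide. -/
theorem PreHilbertStarBimodule.lsmul_eq_rsmul_of_comm
    {A : Type*} [CommCStarAlgebra A] [PartialOrder A] [StarOrderedRing A]
    {E : Type*} [AddCommGroup E] [Module ℂ E]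
    (M : PreHilbertStarBimodule A E)
    (hdef : ∀ x : E, M.normM x = 0 → x = 0)
    (hsa : ∀ x y : E, M.invol x = x → M.invol y = y → star (M.inn x y) = M.inn x y) :
    ∀ (a : A) (x : E), M.lsmul a x = M.rsmul x a := by
  -- symmetry on self-adjoint pairs
  have key : ∀ u v : E, M.invol u = u → M.invol v = v → M.inn u v = M.inn v u := by
    intro u v hu hv
    have h2 := M.star_inn u v
    rw [hu, hv, hsa u v hu hv] at h2
    exact h2
  -- symmetry in general, by bilinearity
  have symm : ∀ u v : E, M.inn u v = M.inn v u := by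
    intro u v
    obtain ⟨p, q, hp, hq, hu⟩ := M.decomp' u
    obtain ⟨r, t, hr, ht, hv⟩ := M.decomp' v
    rw [hu, hv]
    simp only [M.inn_add_left, M.inn_add_right, M.inn_csmul_left, M.inn_csmul_right,
      key p r hp hr, key p t hp ht, key q r hq hr, key q t hq ht, smul_smul]
    module
  intro a x
  set y := M.invol x with hy
  set s := star a with hs
  have e1 : M.inn (M.lsmul a x) (M.rsmul y s) = a * (M.inn x y * s) := by
    rw [M.inn_lsmul_left, M.inn_rsmul_right]
  have e2 : M.inn (M.lsmul a x) (M.lsmul s y) = a * (s * M.inn x y) := by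
    rw [M.inn_lsmul_left, symm x (M.lsmul s y), M.inn_lsmul_left, symm y x]
  have e3 : M.inn (M.rsmul x a) (M.rsmul y s) = (a * M.inn x y) * s := by
    rw [M.inn_rsmul_right, M.inn_rsmul_left, symm x (M.lsmul a y), M.inn_lsmul_left, symm y x]
  have e4 : M.inn (M.rsmul x a) (M.lsmul s y) = (a * s) * M.inn x y := by
    rw [M.inn_rsmul_left, ← M.mul_lsmul, symm x (M.lsmul (a * s) y), M.inn_lsmul_left, symm y x]
  have hid : M.inn (M.lsmul a x - M.rsmul x a) (M.invol (M.lsmul a x - M.rsmul x a)) = 0 := by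
    rw [M.invol_sub', M.invol_lsmul, M.invol_rsmul', ← hy, ← hs,
      M.inn_sub_left', M.inn_sub_right', M.inn_sub_right', e1, e2, e3, e4]
    ring
  have hid2 : M.inn (M.invol (M.lsmul a x - M.rsmul x a)) (M.lsmul a x - M.rsmul x a) = 0 := by
    rw [symm]; exact hid
  have hzero : M.lsmul a x - M.rsmul x a = 0 := by
    apply hdef
    simp [PreHilbertStarBimodule.normM, PreHilbertStarBimodule.normL,
      PreHilbertStarBimodule.normR, hid, hid2]
  exact sub_eq_zero.mp hzero
end

section
/- Let A be a commutative C*-algebra and E a pre-Hilbert *-bimodule over A such that ⟨x, y⟩ is a self-adjoint element of A whenever x, y ∈ E are self-adjoint. Let χ : A → ℂ be a character of A (a nonzero continuous algebra homomorphism). Then for every self-adjoint x ∈ E and every a ∈ A with χ(a) = 0, one has χ(⟨x, a•x⟩) = 0. -/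
/-- If `A` is commutative, inner products of self-adjoint elements of `E` are self-adjoint,
`χ` is a character of `A`, `x ∈ E` is self-adjoint, and `χ(a) = 0`, then `χ(⟨x, a•x⟩) = 0`. -/
theorem PreHilbertStarBimodule.character_inn_lsmul_eq_zero
    {A : Type*} [CommCStarAlgebra A] [PartialOrder A] [StarOrderedRing A]
    {E : Type*} [AddCommGroup E] [Module ℂ E]
    (M : PreHilbertStarBimodule A E)
    (hsa : ∀ x y : E, M.invol x = x → M.invol y = y → star (M.inn x y) = M.inn x y)
    (χ : WeakDual.characterSpace ℂ A) (x : E) (hx : M.invol x = x)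
    (a : A) (ha : χ a = 0) :
    χ (M.inn x (M.lsmul a x)) = 0 := by
  -- basic linearity helpers
  have inn_neg : ∀ z : E, M.inn x (-z) = - M.inn x z := by
    intro z
    have h := M.inn_csmul_right (-1 : ℂ) x z
    simpa [neg_one_smul] using h
  have inn_sub : ∀ y z : E, M.inn x (y - z) = M.inn x y - M.inn x z := by
    intro y z
    rw [sub_eq_add_neg, M.inn_add_right, inn_neg z, ← sub_eq_add_neg]
  have invol_neg : ∀ z : E, M.invol (-z) = - M.invol z := by
    intro z
    have h := M.invol_csmul (-1 : ℂ) z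
    simpa [neg_one_smul] using h
  have invol_sub : ∀ y z : E, M.invol (y - z) = M.invol y - M.invol z := by
    intro y z
    rw [sub_eq_add_neg, M.invol_add, invol_neg z, ← sub_eq_add_neg]
  have invol_rsmul : ∀ b : A, M.invol (M.rsmul x b) = M.lsmul (star b) x := by
    intro b
    have h : M.invol (M.lsmul (star b) x) = M.rsmul x b := by
      rw [M.invol_lsmul, hx, star_star]
    rw [← h, M.invol_invol]
  have star_inn_xx : star (M.inn x x) = M.inn x x := by
    rw [M.star_inn, hx]
  -- key step: for self-adjoint b, ⟨x, b•x⟩ = ⟨x,x⟩ * b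
  have key : ∀ b : A, star b = b → M.inn x (M.lsmul b x) = M.inn x x * b := by
    intro b hb
    set g : A := M.inn x (M.lsmul b x) - M.inn x x * b with hg
    set e : E := Complex.I • (M.lsmul b x - M.rsmul x b) with he
    have hxe : M.invol e = e := by
      rw [he, M.invol_csmul, invol_sub, M.invol_lsmul, hx, hb, invol_rsmul, hb]
      rw [Complex.conj_I, neg_smul, smul_sub, smul_sub, neg_sub]
    have hinn : M.inn x e = Complex.I • g := by
      rw [he, M.inn_csmul_right, inn_sub, M.inn_rsmul_right, hg]
    have hstarg : star g = g := by
      rw [hg, star_sub, M.star_inn, M.invol_lsmul, hx, hb, M.inn_rsmul_left,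
        star_mul, star_inn_xx, hb, mul_comm]
    have h1 : star (M.inn x e) = M.inn x e := hsa x e hx hxe
    rw [hinn, star_smul, hstarg] at h1
    rw [show (star Complex.I) = -Complex.I by simp] at h1
    have h2 : ((Complex.I : ℂ) - (-Complex.I)) • g = 0 := by
      rw [sub_smul, h1, sub_self]
    have h3 : ((Complex.I : ℂ) - (-Complex.I)) ≠ 0 := by
      simp [Complex.ext_iff]
    have h4 : g = 0 := by
      rcases smul_eq_zero.mp h2 with h | h
      · exact absurd h h3
      · exact h
    exact sub_eq_zero.mp h4
  -- extend to all a by decomposing into self-adjoint parts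
  have main : M.inn x (M.lsmul a x) = M.inn x x * a := by
    obtain ⟨b, hbdef⟩ : ∃ b : A, b = (2⁻¹ : ℂ) • (a + star a) := ⟨_, rfl⟩
    obtain ⟨c, hcdef⟩ : ∃ c : A, c = (-(2⁻¹ : ℂ) * Complex.I) • (a - star a) := ⟨_, rfl⟩
    have hb : star b = b := by
      rw [hbdef, star_smul, star_add, star_star]
      simp [add_comm]
    have hc : star c = c := by
      rw [hcdef, star_smul, star_sub, star_star]
      rw [show (a - star a) = -(star a - a) by rw [neg_sub], smul_neg, ← neg_smul]
      congr 1
      simp [Complex.ext_iff]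
    have hdecomp : b + Complex.I • c = a := by
      rw [hbdef, hcdef, smul_smul]
      have : (Complex.I * (-(2⁻¹ : ℂ) * Complex.I)) = (2⁻¹ : ℂ) := by
        rw [show Complex.I * (-(2⁻¹ : ℂ) * Complex.I) = -(2⁻¹:ℂ) * (Complex.I * Complex.I) by
          ring, Complex.I_mul_I]
        ring
      rw [this, smul_add, smul_sub]
      module
    calc M.inn x (M.lsmul a x) = M.inn x (M.lsmul (b + Complex.I • c) x) := by rw [hdecomp]
      _ = M.inn x (M.lsmul b x) + Complex.I • M.inn x (M.lsmul c x) := by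
          rw [M.add_lsmul, M.inn_add_right, M.csmul_lsmul, M.inn_csmul_right]
      _ = M.inn x x * b + Complex.I • (M.inn x x * c) := by rw [key b hb, key c hc]
      _ = M.inn x x * (b + Complex.I • c) := by rw [mul_add, mul_smul_comm]
      _ = M.inn x x * a := by rw [hdecomp]
  rw [main, map_mul, ha, mul_zero]
end
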